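/- The functions H(M,γ) = ½ M·I⁻¹M, C₁(M,γ) = ½ γ·γ, C₂(M,γ) = (M+μ)·γ, and F(M,γ) = ½(M+μ)·(M+μ) are conserved quantities of the system Ṁ = (M+μ) × I⁻¹M, γ̇ = γ × I⁻¹M: along any solution, each of H, C₁, C₂, F is constant in time. -/

import Mathlib

/-!
Both `γ` and `M + μ` evolve by `v̇ = v × ω` with the same angular velocity `ω = I⁻¹M`, so they
rotate rigidly together and all their mutual inner products are conserved: this gives `C₁`, `C₂`
and `F`. For `H`, symmetry of `I⁻¹` makes `Ḣ = Ṁ · I⁻¹M = ((M + μ) × ω) · ω = 0`.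
-/

open Matrix

section Derivatives

variable {ι : Type*} [Fintype ι] {f g : ℝ → ι → ℝ} {f' g' : ι → ℝ} {t : ℝ}

theorem HasDerivAt.dotProduct (hf : HasDerivAt f f' t) (hg : HasDerivAt g g' t) :
    HasDerivAt (fun s => f s ⬝ᵥ g s) (f' ⬝ᵥ g t + f t ⬝ᵥ g') t := by
  simp only [_root_.dotProduct, ← Finset.sum_add_distrib]
  exact HasDerivAt.fun_sum fun i _ => (hasDerivAt_pi.1 hf i).mul (hasDerivAt_pi.1 hg i)

theorem HasDerivAt.mulVec {κ : Type*} (A : Matrix κ ι ℝ) (hf : HasDerivAt f f' t) :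
    HasDerivAt (fun s => A *ᵥ f s) (A *ᵥ f') t :=
  hasDerivAt_pi.2 fun i => by
    simp only [Matrix.mulVec, _root_.dotProduct]
    exact HasDerivAt.fun_sum fun j _ => (hasDerivAt_pi.1 hf j).const_mul (A i j)

theorem HasDerivAt.dotProduct_mulVec_self {A : Matrix ι ι ℝ} (hA : A.IsSymm)
    (hf : HasDerivAt f f' t) :
    HasDerivAt (fun s => f s ⬝ᵥ A *ᵥ f s) (2 * (f' ⬝ᵥ A *ᵥ f t)) t := by
  convert hf.dotProduct (hf.mulVec A) using 1
  rw [Matrix.dotProduct_mulVec, ← Matrix.mulVec_transpose, hA.eq, dotProduct_comm]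
  ring

end Derivatives

theorem eq_of_forall_hasDerivAt_zero {f : ℝ → ℝ} (h : ∀ t, HasDerivAt f 0 t) (t : ℝ) :
    f t = f 0 :=
  is_const_of_deriv_eq_zero (fun s => (h s).differentiableAt) (fun s => (h s).deriv) t 0

theorem cross_dotProduct_add_dotProduct_cross (a b w : Fin 3 → ℝ) :
    a ⨯₃ w ⬝ᵥ b + a ⬝ᵥ b ⨯₃ w = 0 := by
  rw [dotProduct_comm, triple_product_permutation a, ← cross_anticomm, dotProduct_neg,
    neg_add_cancel]

section Rotation

variable {a b ω : ℝ → Fin 3 → ℝ}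

theorem dotProduct_eq_of_hasDerivAt_cross (ha : ∀ t, HasDerivAt a (a t ⨯₃ ω t) t)
    (hb : ∀ t, HasDerivAt b (b t ⨯₃ ω t) t) (t : ℝ) : a t ⬝ᵥ b t = a 0 ⬝ᵥ b 0 :=
  eq_of_forall_hasDerivAt_zero (f := fun s => a s ⬝ᵥ b s) (fun s => by
    simpa only [cross_dotProduct_add_dotProduct_cross] using (ha s).dotProduct (hb s)) t

theorem dotProduct_mulVec_self_eq_of_hasDerivAt_cross {A : Matrix (Fin 3) (Fin 3) ℝ}
    (hA : A.IsSymm) (ha : ∀ t, HasDerivAt a (b t ⨯₃ (A *ᵥ a t)) t) (t : ℝ) :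
    a t ⬝ᵥ A *ᵥ a t = a 0 ⬝ᵥ A *ᵥ a 0 :=
  eq_of_forall_hasDerivAt_zero (f := fun s => a s ⬝ᵥ A *ᵥ a s) (fun s => by
    simpa only [dotProduct_comm _ (A *ᵥ a s), dot_cross_self, mul_zero] using
      (ha s).dotProduct_mulVec_self hA) t

end Rotation

theorem conserved_quantities_zhukovski_general
    (I : Matrix (Fin 3) (Fin 3) ℝ) (hsym : I.IsSymm)
    (μ : Fin 3 → ℝ) (M γ : ℝ → Fin 3 → ℝ)
    (hM : ∀ t, HasDerivAt M (crossProduct (M t + μ) (I⁻¹.mulVec (M t))) t)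
    (hγ : ∀ t, HasDerivAt γ (crossProduct (γ t) (I⁻¹.mulVec (M t))) t) :
    ∀ t : ℝ,
      (1/2) * (M t ⬝ᵥ I⁻¹.mulVec (M t)) = (1/2) * (M 0 ⬝ᵥ I⁻¹.mulVec (M 0)) ∧
      (1/2) * (γ t ⬝ᵥ γ t) = (1/2) * (γ 0 ⬝ᵥ γ 0) ∧
      (M t + μ) ⬝ᵥ γ t = (M 0 + μ) ⬝ᵥ γ 0 ∧
      (1/2) * ((M t + μ) ⬝ᵥ (M t + μ)) = (1/2) * ((M 0 + μ) ⬝ᵥ (M 0 + μ)) := by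
  have hinv : I⁻¹.IsSymm := by
    rw [Matrix.IsSymm, Matrix.transpose_nonsing_inv, hsym.eq]
  have hMμ : ∀ t, HasDerivAt (fun s => M s + μ) ((M t + μ) ⨯₃ (I⁻¹ *ᵥ M t)) t :=
    fun t => (hM t).add_const μ
  intro t
  refine ⟨?_, ?_, ?_, ?_⟩
  · rw [dotProduct_mulVec_self_eq_of_hasDerivAt_cross hinv hM t]
  · rw [dotProduct_eq_of_hasDerivAt_cross hγ hγ t]
  · exact dotProduct_eq_of_hasDerivAt_cross hMμ hγ t
  · rw [dotProduct_eq_of_hasDerivAt_cross hMμ hMμ t]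

open Matrix in
theorem conserved_quantities_zhukovski
    (I : Matrix (Fin 3) (Fin 3) ℝ) (hI : Invertible I) (hsym : I.IsSymm)
    (μ : Fin 3 → ℝ) (M γ : ℝ → Fin 3 → ℝ)
    (hM : ∀ t, HasDerivAt M (crossProduct (M t + μ) (I⁻¹.mulVec (M t))) t)
    (hγ : ∀ t, HasDerivAt γ (crossProduct (γ t) (I⁻¹.mulVec (M t))) t) :
    ∀ t : ℝ,
      (1/2) * (M t ⬝ᵥ I⁻¹.mulVec (M t)) = (1/2) * (M 0 ⬝ᵥ I⁻¹.mulVec (M 0)) ∧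
      (1/2) * (γ t ⬝ᵥ γ t) = (1/2) * (γ 0 ⬝ᵥ γ 0) ∧
      (M t + μ) ⬝ᵥ γ t = (M 0 + μ) ⬝ᵥ γ 0 ∧
      (1/2) * ((M t + μ) ⬝ᵥ (M t + μ)) = (1/2) * ((M 0 + μ) ⬝ᵥ (M 0 + μ)) :=
  conserved_quantities_zhukovski_general I hsym μ M γ hM hγ
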